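/- arXiv:1512.01483 — 2 statements merged into one kernel-verified Lean document; each statement's English description precedes it below -/
import Mathlib

section
/- The modular presweep map presweep_m : A → A* is injective, and the map inverse_presweep_m (Algorithm 2) satisfies inverse_presweep_m ∘ presweep_m = id on A. -/
/-- Modular level of the `j`-th letter (0-indexed) of `w`: sum of the first `j+1` letters in `Fin m`. -/
def modLevel (m : ℕ) [NeZero m] (w : List (Fin m)) (j : ℕ) : Fin m :=
  (w.take (j+1)).sum

/-- The modular sweep map: for k = m-1,…,0, read `w` right-to-left and append letters of level k. -/
def msweep (m : ℕ) [NeZero m] (w : List (Fin m)) : List (Fin m) :=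
  ((List.range m).reverse).flatMap (fun k =>
    ((List.range w.length).reverse).filterMap (fun j =>
      if (modLevel m w j : ℕ) = k then some (w.getD j 0) else none))

/-- The modular presweep map: block `k` consists of the letters of level `k`, read right-to-left. -/
def presweep (m : ℕ) [NeZero m] (w : List (Fin m)) (k : Fin m) : List (Fin m) :=
  ((List.range w.length).reverse).filterMap (fun j =>
    if modLevel m w j = k then some (w.getD j 0) else none)

/-- The forgetful map: concatenate the blocks u*_{m-1} | … | u*_0. -/
def forget {m : ℕ} (P : Fin m → List (Fin m)) : List (Fin m) :=
  (List.finRange m).reverse.flatMap P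

/-- One pass of the inverse modular presweep algorithm, returning the removed letters
in removal order (i.e. w_N, w_{N-1}, …), or `none` upon hitting an empty block. -/
def invPresweepAux {m : ℕ} [NeZero m] :
    ℕ → (Fin m → List (Fin m)) → Fin m → Option (List (Fin m))
  | 0, _, _ => some []
  | n+1, P, l =>
    match P l with
    | [] => none
    | a :: rest => (invPresweepAux n (Function.update P l rest) (l - a)).map (fun ws => a :: ws)

/-- The inverse modular presweep map (Algorithm 2): starts at level |u| mod m. -/
def invPresweep {m : ℕ} [NeZero m] (N : ℕ) (P : Fin m → List (Fin m)) :
    Option (List (Fin m)) :=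
  (invPresweepAux N P ((forget P).sum)).map List.reverse

/-- The presweepResidual partitioned word left over when the inverse presweep algorithm stops. -/
def presweepResidual {m : ℕ} [NeZero m] :
    ℕ → (Fin m → List (Fin m)) → Fin m → (Fin m → List (Fin m))
  | 0, P, _ => P
  | n+1, P, l =>
    match P l with
    | [] => P
    | a :: rest => presweepResidual n (Function.update P l rest) (l - a)

/-- Sum of all letters of a partitioned word, as a natural number. -/
def totalSum {m : ℕ} (P : Fin m → List (Fin m)) : ℕ :=
  ∑ k : Fin m, ((P k).map Fin.val).sum

/-- Number of filled cells in column `j` of the balancing array: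
cell (letter a in block k, column j) is filled iff j ∈ {k, k+1, …, k+a-1} mod m. -/
def colCount {m : ℕ} [NeZero m] (P : Fin m → List (Fin m)) (j : Fin m) : ℕ :=
  ∑ k : Fin m, ((P k).filter (fun a => decide (((j - k : Fin m) : ℕ) < (a : ℕ)))).length

/-- The equitable number of filled cells for column `j`. -/
def eqCount {m : ℕ} [NeZero m] (P : Fin m → List (Fin m)) (j : Fin m) : ℕ :=
  if 1 ≤ (j : ℕ) ∧ (j : ℕ) ≤ totalSum P % m then totalSum P / m + 1 else totalSum P / m

/-- A partitioned word is equitable if every column of its balancing array is equitably filled. -/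
def Equitable {m : ℕ} [NeZero m] (P : Fin m → List (Fin m)) : Prop :=
  ∀ j : Fin m, colCount P j = eqCount P j

/-- The list recording, for each position of `forget P`, the index of the block containing it. -/
def blockList {m : ℕ} (P : Fin m → List (Fin m)) : List (Fin m) :=
  (List.finRange m).reverse.flatMap (fun k => (P k).map (fun _ => k))

/-- The index of the block containing the `i`-th letter (0-indexed) of `forget P`. -/
def blockIdx {m : ℕ} [NeZero m] (P : Fin m → List (Fin m)) (i : ℕ) : ℕ :=
  (((blockList P).getD i 0 : Fin m) : ℕ)

/-- A balanced block-suffix of `P`: a suffix of each block, with letter sum ≡ 0 mod m. -/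
def IsBBS {m : ℕ} [NeZero m] (P S : Fin m → List (Fin m)) : Prop :=
  (∀ k, S k <:+ P k) ∧ totalSum S % m = 0

/-- A left balanced block-suffix: a balanced block-suffix with empty rightmost block. -/
def IsLeftBBS {m : ℕ} [NeZero m] (P S : Fin m → List (Fin m)) : Prop :=
  IsBBS P S ∧ S 0 = []

/-- A minimal left balanced block-suffix: nonempty, and its intersection with any balanced
block-suffix is itself or empty. -/
def MinLeftBBS {m : ℕ} [NeZero m] (P S : Fin m → List (Fin m)) : Prop :=
  IsLeftBBS P S ∧ (∃ k, S k ≠ []) ∧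
  ∀ T, IsBBS P T → (∀ k, S k <:+ T k) ∨ (∀ k, S k = [] ∨ T k = [])

/-- Shift the letters of a left balanced block-suffix `S` of `P` one block to the right
(from block k to block k-1). -/
def shiftBy {m : ℕ} [NeZero m] (P S : Fin m → List (Fin m)) : Fin m → List (Fin m) :=
  fun k => S (k + 1) ++ (P k).take ((P k).length - (S k).length)

/-- One step of the rightmost-partition algorithm (Algorithm 4): with `j` the rightmost
(= smallest-index) column less than equitably filled, move the leftmost letter of block `j-1`
to the end of block `j`. -/
def stepR {m : ℕ} [NeZero m] (P Q : Fin m → List (Fin m)) : Prop :=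
  ∃ j : Fin m, colCount P j < eqCount P j ∧
    (∀ j' : Fin m, j' < j → eqCount P j' ≤ colCount P j') ∧
    Q = fun k => if k = j then P j ++ (P (j-1)).take 1
         else if k = j - 1 then (P (j-1)).tail else P k

/-- One step of the leftmost-partition algorithm (Algorithm 5): with `j` the leftmost
(= largest-index) column more than equitably filled, move the rightmost letter of block `j`
to the front of block `j-1`. -/
def stepL {m : ℕ} [NeZero m] (P Q : Fin m → List (Fin m)) : Prop :=
  ∃ j : Fin m, eqCount P j < colCount P j ∧
    (∀ j' : Fin m, j < j' → colCount P j' ≤ eqCount P j') ∧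
    Q = fun k => if k = j then (P j).dropLast
         else if k = j - 1 then (P j).drop ((P j).length - 1) ++ P k else P k

/-- The sum of all letters of a partitioned word in `Fin m`, i.e. |u| mod m. -/
def totalSumFin {m : ℕ} [NeZero m] (P : Fin m → List (Fin m)) : Fin m :=
  ∑ k : Fin m, (P k).sum

/-- Prepend the letter `i` to block `i + |u|_m` of `P`. -/
def addLetter {m : ℕ} [NeZero m] (P : Fin m → List (Fin m)) (i : Fin m) :
    Fin m → List (Fin m) :=
  fun k => if k = i + totalSumFin P then i :: P k else P k

/-- The n-th level of the complete m-ary tree T*_m of partitioned words. -/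
def TreeLevel (m : ℕ) [NeZero m] : ℕ → Set (Fin m → List (Fin m))
  | 0 => {fun _ => []}
  | n+1 => {Q | ∃ P ∈ TreeLevel m n, ∃ i : Fin m, Q = addLetter P i}

/-- The (integer) level of the `j`-th letter (0-indexed) of a word over ℤ. -/
def zlevel (w : List ℤ) (j : ℕ) : ℤ :=
  (w.take (j+1)).sum

/-- The sequence of levels swept: k = -1, -2, …, then …, 2, 1, 0. -/
def sweepKeys (w : List ℤ) : List ℤ :=
  ((List.range ((w.map Int.natAbs).sum)).map (fun t => -((t : ℤ)+1))) ++
  ((List.range ((w.map Int.natAbs).sum + 1)).reverse.map (fun t => (t : ℤ)))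

/-- The sweep map on words over ℤ. -/
def zsweep (w : List ℤ) : List ℤ :=
  (sweepKeys w).flatMap (fun k =>
    ((List.range w.length).reverse).filterMap (fun j =>
      if zlevel w j = k then some (w.getD j 0) else none))

/-- The set A_ℤ of words containing exactly `e j` copies of `a j` for each `j`. -/
def AZ (n : ℕ) (a : Fin n → ℤ) (e : Fin n → ℕ) : Set (List ℤ) :=
  {w | (w : Multiset ℤ) = ∑ j : Fin n, Multiset.replicate (e j) (a j)}

/-- The set A_ℕ of Dyck words: words of A_ℤ with all levels nonnegative. -/
def ANset (n : ℕ) (a : Fin n → ℤ) (e : Fin n → ℕ) : Set (List ℤ) :=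
  {w | w ∈ AZ n a e ∧ ∀ j < w.length, 0 ≤ zlevel w j}

/-- The sequence of levels for the zeta map: k = 0, 1, 2, …, then …, -3, -2, -1. -/
def zetaKeys (w : List ℤ) : List ℤ :=
  ((List.range ((w.map Int.natAbs).sum + 1)).map (fun t => (t : ℤ))) ++
  ((List.range ((w.map Int.natAbs).sum)).reverse.map (fun t => -((t : ℤ)+1)))

/-- The zeta map: sort the letters of `w` by level, reading left-to-right, for
k = 0,1,2,… and then k = …,-3,-2,-1. -/
def zeta (w : List ℤ) : List ℤ :=
  (zetaKeys w).flatMap (fun k =>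
    (List.range w.length).filterMap (fun j =>
      if zlevel w j = k then some (w.getD j 0) else none))

/-- The set of rational Dyck words: -b copies of a, a copies of b, all partial sums ≥ 0. -/
def Dab (a b : ℤ) : Set (List ℤ) :=
  {w | (w : Multiset ℤ) = Multiset.replicate (-b).toNat a + Multiset.replicate a.toNat b ∧
       ∀ j < w.length, 0 ≤ zlevel w j}

/-! Appending a letter `a` to `v` only adds `a` at the front of block `(v ++ [a]).sum`, the level
of the new last letter. The total sum of a presweep is the level of the last letter, so the
inverse algorithm starts at the right block, removes exactly that `a`, and continues at level
`(v ++ [a]).sum - a = v.sum` on `presweep m v`; induction on `w` from the right. -/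

section Presweep

variable {m : ℕ} [NeZero m]

lemma modLevel_append_singleton_of_lt (v : List (Fin m)) (a : Fin m) {j : ℕ}
    (hj : j < v.length) : modLevel m (v ++ [a]) j = modLevel m v j := by
  rw [modLevel, modLevel, List.take_append_of_le_length (by omega)]

lemma modLevel_append_singleton_length (v : List (Fin m)) (a : Fin m) :
    modLevel m (v ++ [a]) v.length = v.sum + a := by
  rw [modLevel, List.take_of_length_le (by simp), List.sum_append, List.sum_singleton]

lemma presweep_append_singleton_apply (v : List (Fin m)) (a k : Fin m) :
    presweep m (v ++ [a]) k = (if v.sum + a = k then [a] else []) ++ presweep m v k := by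
  unfold presweep
  rw [List.length_append, List.length_singleton, List.range_succ, List.reverse_append,
    List.reverse_singleton, List.singleton_append, List.filterMap_cons,
    modLevel_append_singleton_length, List.getD_append_right _ _ _ _ le_rfl, Nat.sub_self,
    List.getD_cons_zero]
  have hprefix : ∀ j ∈ (List.range v.length).reverse,
      (if modLevel m (v ++ [a]) j = k then some ((v ++ [a]).getD j 0) else none)
      = (if modLevel m v j = k then some (v.getD j 0) else none) := by
    intro j hj
    rw [List.mem_reverse, List.mem_range] at hj
    rw [modLevel_append_singleton_of_lt v a hj, List.getD_append _ _ _ _ hj]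
  rw [List.filterMap_congr hprefix]
  split_ifs <;> rfl

lemma presweep_append_singleton (v : List (Fin m)) (a : Fin m) :
    presweep m (v ++ [a]) =
      Function.update (presweep m v) (v.sum + a) (a :: presweep m v (v.sum + a)) := by
  funext k
  rw [presweep_append_singleton_apply, Function.update_apply]
  by_cases hk : k = v.sum + a
  · subst hk; simp
  · simp [hk, Ne.symm hk]

lemma sum_forget (P : Fin m → List (Fin m)) : (forget P).sum = ∑ k, (P k).sum := by
  rw [forget, List.flatMap_def, List.sum_flatten, List.map_reverse, List.map_reverse,
    List.sum_reverse, List.map_map, ← Fin.sum_univ_def]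
  rfl

lemma sum_sum_presweep (w : List (Fin m)) : ∑ k, (presweep m w k).sum = w.sum := by
  induction w using List.reverseRecOn with
  | nil => simp [presweep]
  | append_singleton v a ih =>
    simp only [presweep_append_singleton_apply, List.sum_append, Finset.sum_add_distrib, ih,
      apply_ite List.sum, List.sum_singleton, List.sum_nil, Finset.sum_ite_eq, Finset.mem_univ,
      if_true, add_comm]

lemma invPresweepAux_presweep (w : List (Fin m)) :
    invPresweepAux w.length (presweep m w) w.sum = some w.reverse := by
  induction w using List.reverseRecOn with
  | nil => simp [invPresweepAux]
  | append_singleton v a ih =>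
    rw [List.length_append, List.length_singleton, List.sum_append, List.sum_singleton,
      presweep_append_singleton, invPresweepAux, Function.update_self]
    dsimp only
    rw [Function.update_idem, Function.update_eq_self, add_sub_cancel_right, ih]
    simp

end Presweep

/-- The modular presweep map is injective on words of length N, and the
inverse modular presweep map (Algorithm 2) satisfies inverse_presweep ∘ presweep = id. -/
theorem presweep_injective_and_left_inverse (m N : ℕ) [NeZero m] :
    Set.InjOn (fun w => presweep m w) {w : List (Fin m) | w.length = N} ∧
    ∀ w : List (Fin m), w.length = N → invPresweep N (presweep m w) = some w := by
  have leftInverse : ∀ w : List (Fin m), w.length = N → invPresweep N (presweep m w) = some w := by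
    rintro w rfl
    rw [invPresweep, sum_forget, sum_sum_presweep, invPresweepAux_presweep, Option.map_some,
      List.reverse_reverse]
  refine ⟨fun w₁ h₁ w₂ h₂ h => ?_, leftInverse⟩
  apply Option.some_injective
  rw [← leftInverse w₁ h₁, ← leftInverse w₂ h₂]
  exact congrArg (invPresweep N) h
end

section
/- If m > Σ_j e_j·|a_j|, then the sweep map on A_Z agrees with the modular sweep map sweep_m after replacing each letter by its residue mod m: for every w ∈ A_Z, reducing sweep(w) letterwise mod m equals sweep_m applied to the letterwise mod-m reduction of w. -/
/-!
All levels of `w` lie in `[-B, B]` and any two of them differ by at most `B`, where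
`B = Σ |wᵢ| = Σ eⱼ |aⱼ| < m`. Hence reduction mod `m` is injective on the levels that occur, and
it turns the sweep order `-1, -2, …, 2, 1, 0` on them into the decreasing order of residues
(a negative level `ℓ` becomes `ℓ + m`, which exceeds every nonnegative level `ℓ'` because
`ℓ' - ℓ ≤ B < m`). So both maps concatenate the same blocks of letters in the same order once
the empty blocks are discarded.
-/

namespace List

variable {α β γ : Type*}

theorem flatMap_filter_of_forall_eq_nil {l : List α} {f : α → List β} {p : α → Bool}
    (h : ∀ a ∈ l, p a = false → f a = []) : (l.filter p).flatMap f = l.flatMap f := by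
  induction l with
  | nil => rfl
  | cons a l ih =>
    rw [forall_mem_cons] at h
    cases ha : p a <;> simp [ha, h.1, ih h.2]

theorem flatMap_eq_flatMap_of_map_filter {K : List α} {K' : List β} {F : α → List γ}
    {G : β → List γ} {p : α → Bool} {q : β → Bool} (φ : α → β)
    (hp : ∀ k ∈ K, p k = false → F k = []) (hq : ∀ k ∈ K', q k = false → G k = [])
    (hK : (K.filter p).map φ = K'.filter q) (hFG : ∀ k ∈ K, p k → F k = G (φ k)) :
    K.flatMap F = K'.flatMap G := by
  rw [← flatMap_filter_of_forall_eq_nil hp, ← flatMap_filter_of_forall_eq_nil hq, ← hK,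
    flatMap_map]
  exact flatMap_congr fun k hk => (mem_filter.mp hk).elim (hFG k)

theorem Sublist.natAbs_sum_le {l w : List ℤ} (h : l <+ w) :
    l.sum.natAbs ≤ (w.map Int.natAbs).sum :=
  (le_sum_of_subadditive Int.natAbs rfl.le Int.natAbs_add_le l).trans <|
    (h.map _).sum_le_sum fun _ _ => Nat.zero_le _

end List

open List

section SweepBy

variable {κ κ' γ : Type*} [DecidableEq κ] [DecidableEq κ']

def levelBlock (lev : ℕ → κ) (d : γ) (w : List γ) (k : κ) : List γ :=
  (range w.length).reverse.filterMap fun j => if lev j = k then some (w.getD j d) else none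

def sweepBy (lev : ℕ → κ) (keys : List κ) (d : γ) (w : List γ) : List γ :=
  keys.flatMap (levelBlock lev d w)

theorem levelBlock_eq_nil_iff {lev : ℕ → κ} {d : γ} {w : List γ} {k : κ} :
    levelBlock lev d w k = [] ↔ ¬∃ j < w.length, lev j = k := by
  simp [levelBlock, filterMap_eq_nil_iff]

theorem map_sweepBy {δ : Type*} (f : γ → δ) (lev : ℕ → κ) (keys : List κ) (d : γ) (w : List γ) :
    (sweepBy lev keys d w).map f = sweepBy lev keys (f d) (w.map f) := by
  refine (map_flatMap ..).trans <| flatMap_congr fun k _ => ?_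
  simp only [levelBlock, map_filterMap, length_map]
  refine filterMap_congr fun j _ => ?_
  split_ifs <;> simp

theorem sweepBy_comp (lev : ℕ → κ) (φ : κ → κ') (K : List κ) (K' : List κ') (d : γ)
    (w : List γ) (hinj : ∀ i < w.length, ∀ j < w.length, φ (lev i) = φ (lev j) → lev i = lev j)
    (hK : (K.filter fun k => ∃ j < w.length, lev j = k).map φ =
      K'.filter fun k => ∃ j < w.length, φ (lev j) = k) :
    sweepBy lev K d w = sweepBy (fun j => φ (lev j)) K' d w := by
  refine flatMap_eq_flatMap_of_map_filter φ
    (fun k _ hk => levelBlock_eq_nil_iff.mpr (by simpa using hk))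
    (fun k _ hk => levelBlock_eq_nil_iff.mpr (by simpa using hk)) hK fun k _ hk => ?_
  obtain ⟨i, hi, rfl⟩ := of_decide_eq_true hk
  refine filterMap_congr fun j hj => ?_
  have hj : j < w.length := by simpa using hj
  by_cases h : lev j = lev i
  · simp [h]
  · rw [if_neg h, if_neg (mt (hinj j hj i hi) h)]

end SweepBy

theorem zsweep_eq_sweepBy (w : List ℤ) : zsweep w = sweepBy (zlevel w) (sweepKeys w) 0 w := rfl

theorem msweep_eq_sweepBy (m : ℕ) [NeZero m] (w : List (Fin m)) :
    msweep m w = sweepBy (fun j => (modLevel m w j : ℕ)) (range m).reverse 0 w := rfl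

theorem sum_map_natAbs_of_mem_AZ {n : ℕ} {a : Fin n → ℤ} {e : Fin n → ℕ} {w : List ℤ}
    (hw : w ∈ AZ n a e) : (w.map Int.natAbs).sum = ∑ j, e j * (a j).natAbs := by
  have h := congrArg (fun s : Multiset ℤ => (s.map Int.natAbs).sum) hw
  simp only [Multiset.map_coe, Multiset.sum_coe] at h
  rw [h, ← Multiset.coe_mapAddMonoidHom, map_sum, ← Multiset.coe_sumAddMonoidHom, map_sum]
  simp

theorem sweepKeys_eq (w : List ℤ) : sweepKeys w =
    (range (w.map Int.natAbs).sum).map (fun t : ℕ => -((t : ℤ) + 1)) ++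
      (range ((w.map Int.natAbs).sum + 1)).reverse.map (fun t : ℕ => (t : ℤ)) := by
  simp only [sweepKeys, pure_def, bind_eq_flatMap, ← map_eq_flatMap, map_map]
  rfl

theorem mem_sweepKeys {w : List ℤ} {x : ℤ} :
    x ∈ sweepKeys w ↔ x.natAbs ≤ (w.map Int.natAbs).sum := by
  simp only [sweepKeys_eq, mem_append, mem_map, mem_range, mem_reverse]
  constructor
  · rintro (⟨t, ht, rfl⟩ | ⟨t, ht, rfl⟩) <;> omega
  · intro h
    rcases lt_or_ge x 0 with hx | hx
    · exact Or.inl ⟨(-x - 1).toNat, by omega, by omega⟩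
    · exact Or.inr ⟨x.toNat, by omega, by omega⟩

def SweepsBefore (x y : ℤ) : Prop :=
  (x < 0 ∧ 0 ≤ y) ∨ (y < x ∧ (x < 0 ↔ y < 0))

theorem sweepKeys_pairwise (w : List ℤ) : (sweepKeys w).Pairwise SweepsBefore := by
  simp only [SweepsBefore, sweepKeys_eq, pairwise_append, pairwise_map, pairwise_reverse,
    mem_map, mem_range, mem_reverse]
  refine ⟨pairwise_lt_range.imp (by omega), pairwise_lt_range.imp (by omega), ?_⟩
  rintro _ ⟨t, ht, rfl⟩ _ ⟨s, hs, rfl⟩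
  omega

theorem natAbs_zlevel_le (w : List ℤ) (j : ℕ) :
    (zlevel w j).natAbs ≤ (w.map Int.natAbs).sum :=
  (take_sublist _ _).natAbs_sum_le

theorem natAbs_zlevel_sub_zlevel_le (w : List ℤ) (i j : ℕ) :
    (zlevel w j - zlevel w i).natAbs ≤ (w.map Int.natAbs).sum := by
  wlog hij : i ≤ j generalizing i j
  · rw [← Int.natAbs_neg, neg_sub]
    exact this j i (by omega)
  have hsplit : zlevel w j = zlevel w i + ((w.take (j + 1)).drop (i + 1)).sum := by
    have hprefix : w.take (i + 1) = (w.take (j + 1)).take (i + 1) := by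
      rw [take_take, min_eq_left (by omega)]
    rw [zlevel, zlevel, hprefix, ← sum_append, take_append_drop]
  rw [hsplit, add_sub_cancel_left]
  exact ((drop_sublist _ _).trans (take_sublist _ _)).natAbs_sum_le

section Residue

open Fin.CommRing

variable {m : ℕ} [NeZero m]

theorem Fin.coe_val_intCast_eq_ite {x : ℤ} (hx : -m ≤ x) (hx' : x < m) :
    (((x : Fin m) : ℕ) : ℤ) = if x < 0 then x + m else x := by
  rw [Fin.val_intCast, Int.toNat_of_nonneg (Int.emod_nonneg _ (by omega))]
  split_ifs with hx0
  · rw [Int.emod_eq_add_self_emod, Int.emod_eq_of_lt (by omega) (by omega)]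
  · exact Int.emod_eq_of_lt (by omega) hx'

theorem Fin.eq_of_intCast_eq_of_natAbs_sub_lt {x y : ℤ} (hxy : (x - y).natAbs < m)
    (h : (x : Fin m) = y) : x = y := by
  have hmod : x % m = y % m := by
    have h' := congrArg (fun i : Fin m => ((i : ℕ) : ℤ)) h
    simpa only [Fin.val_intCast, Int.toNat_of_nonneg (Int.emod_nonneg _ (NeZero.ne (m : ℤ)))]
      using h'
  have hdvd : (m : ℤ) ∣ x - y := Int.ModEq.dvd hmod.symm
  exact Int.eq_of_sub_eq_zero (Int.eq_zero_of_dvd_of_natAbs_lt_natAbs hdvd (by simpa using hxy))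

theorem Fin.val_intCast_lt_val_intCast {x y : ℤ} (hx : x.natAbs < m) (hy : y.natAbs < m)
    (hxy : (y - x).natAbs < m) (h : SweepsBefore x y) :
    ((y : Fin m) : ℕ) < ((x : Fin m) : ℕ) := by
  unfold SweepsBefore at h
  have hx' := Fin.coe_val_intCast_eq_ite (m := m) (x := x) (by omega) (by omega)
  have hy' := Fin.coe_val_intCast_eq_ite (m := m) (x := y) (by omega) (by omega)
  zify
  rw [hx', hy']
  split_ifs <;> omega

theorem modLevel_map_intCast (w : List ℤ) (j : ℕ) :
    modLevel m (w.map (↑)) j = (zlevel w j : Fin m) := by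
  rw [modLevel, zlevel, ← map_take]
  exact (map_list_sum (Int.castRingHom (Fin m)) _).symm

theorem map_intCast_filter_sweepKeys (w : List ℤ) (hB : (w.map Int.natAbs).sum < m) :
    ((sweepKeys w).filter fun k => ∃ j < w.length, zlevel w j = k).map
        (fun x : ℤ => ((x : Fin m) : ℕ)) =
      (range m).reverse.filter fun k => ∃ j < w.length, ((zlevel w j : Fin m) : ℕ) = k := by
  refine Pairwise.eq_of_mem_iff (r := (· > ·)) ?_ ?_ fun k => ?_
  · rw [pairwise_map]
    refine ((sweepKeys_pairwise w).filter _).imp_of_mem fun hx hy hxy => ?_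
    obtain ⟨i, -, rfl⟩ := of_decide_eq_true (mem_filter.mp hx).2
    obtain ⟨j, -, rfl⟩ := of_decide_eq_true (mem_filter.mp hy).2
    exact Fin.val_intCast_lt_val_intCast ((natAbs_zlevel_le w i).trans_lt hB)
      ((natAbs_zlevel_le w j).trans_lt hB) ((natAbs_zlevel_sub_zlevel_le w i j).trans_lt hB) hxy
  · exact (pairwise_reverse.mpr pairwise_lt_range).filter _
  · simp only [mem_map, mem_filter, mem_reverse, mem_range, decide_eq_true_eq]
    constructor
    · rintro ⟨_, ⟨-, j, hj, rfl⟩, rfl⟩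
      exact ⟨Fin.is_lt _, j, hj, rfl⟩
    · rintro ⟨-, j, hj, rfl⟩
      exact ⟨_, ⟨mem_sweepKeys.mpr (natAbs_zlevel_le w j), j, hj, rfl⟩, rfl⟩

end Residue

open Fin.CommRing in
/-- If m > Σ_j e_j·|a_j|, then for every w ∈ A_ℤ the sweep map agrees with
the modular sweep map after reducing each letter mod m. -/
theorem sweep_eq_modular_sweep (n : ℕ) (a : Fin n → ℤ) (e : Fin n → ℕ) (m : ℕ) [NeZero m]
    (hm : (∑ j : Fin n, e j * (a j).natAbs) < m)
    (w : List ℤ) (hw : w ∈ AZ n a e) :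
    (zsweep w).map (fun x : ℤ => (x : Fin m)) =
      msweep m (w.map (fun x : ℤ => (x : Fin m))) := by
  have hB : (w.map Int.natAbs).sum < m := sum_map_natAbs_of_mem_AZ hw ▸ hm
  rw [zsweep_eq_sweepBy, map_sweepBy, msweep_eq_sweepBy, Int.cast_zero]
  simp only [modLevel_map_intCast]
  refine sweepBy_comp _ (fun x : ℤ => ((x : Fin m) : ℕ)) _ _ _ _ (fun i _ j _ h => ?_) ?_
  · exact Fin.eq_of_intCast_eq_of_natAbs_sub_lt
      ((natAbs_zlevel_sub_zlevel_le w j i).trans_lt hB) (Fin.val_injective h)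
  · simpa using map_intCast_filter_sweepKeys w hB
end
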